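/- arXiv:1003.2289 — 5 statements merged into one kernel-verified Lean document; each statement's English description precedes it below -/
import Mathlib

section
/- There exists a constant K ≥ 0 (in fact K = 1 works for the regulator and K = 2 for the reflector) such that for any two continuous functions z₁, z₂ : [0,T] → ℝ with z₁(0), z₂(0) ≥ 0, defining yᵢ(t) = max_{s∈[0,t]}(zᵢ(s))⁻ and xᵢ = zᵢ + yᵢ, we have for each t ∈ [0,T]: sup_{s∈[0,t]} |y₁(s) − y₂(s)| ≤ K · sup_{s∈[0,t]} |z₁(s) − z₂(s)| and sup_{s∈[0,t]} |x₁(s) − x₂(s)| ≤ 2K · sup_{s∈[0,t]} |z₁(s) − z₂(s)|. -/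
open Set

/-! The regulator at time `s` is a supremum over `[0, s]` of the negative part, which is
1-Lipschitz; a supremum of functions moves by at most the uniform distance between them, so
`|y₁ - y₂| ≤ sup |z₁ - z₂|` (constant `K = 1`). Since `x = z + y`, the triangle inequality then
gives the constant `2K` for the reflector. -/

lemma ciSup_sub_ciSup_le {ι : Type*} [Nonempty ι] {f g : ι → ℝ} (hg : BddAbove (range g))
    {M : ℝ} (h : ∀ i, f i - g i ≤ M) : (⨆ i, f i) - ⨆ i, g i ≤ M := by
  rw [sub_le_iff_le_add]
  exact ciSup_le fun i => by linarith [h i, le_ciSup hg i]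

lemma abs_ciSup_sub_ciSup_le {ι : Type*} [Nonempty ι] {f g : ι → ℝ}
    (hf : BddAbove (range f)) (hg : BddAbove (range g)) {M : ℝ} (h : ∀ i, |f i - g i| ≤ M) :
    |(⨆ i, f i) - ⨆ i, g i| ≤ M :=
  abs_sub_le_iff.2
    ⟨ciSup_sub_ciSup_le hg fun i => (le_abs_self _).trans (h i),
      ciSup_sub_ciSup_le hf fun i => (le_abs_self _).trans (abs_sub_comm (f i) (g i) ▸ h i)⟩

lemma bddAbove_range_of_continuousOn_Icc {f : ℝ → ℝ} {a b : ℝ} (hf : ContinuousOn f (Icc a b)) :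
    BddAbove (range fun u : Icc a b => f u) := by
  rw [← image_eq_range]
  exact isCompact_Icc.bddAbove_image hf

lemma abs_iSup_negPart_sub_iSup_negPart_le {z₁ z₂ : ℝ → ℝ} {a b M : ℝ} (hab : a ≤ b)
    (hz₁ : ContinuousOn z₁ (Icc a b)) (hz₂ : ContinuousOn z₂ (Icc a b))
    (hM : ∀ u ∈ Icc a b, |z₁ u - z₂ u| ≤ M) :
    |(⨆ u : Icc a b, max (-(z₁ u)) 0) - ⨆ u : Icc a b, max (-(z₂ u)) 0| ≤ M := by
  have : Nonempty (Icc a b) := ⟨⟨a, left_mem_Icc.2 hab⟩⟩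
  refine abs_ciSup_sub_ciSup_le (bddAbove_range_of_continuousOn_Icc (hz₁.neg.sup continuousOn_const))
    (bddAbove_range_of_continuousOn_Icc (hz₂.neg.sup continuousOn_const)) fun u => ?_
  calc |max (-(z₁ u)) 0 - max (-(z₂ u)) 0| ≤ |-(z₁ u) - -(z₂ u)| := abs_max_sub_max_le_abs _ _ _
    _ = |z₁ u - z₂ u| := by rw [neg_sub_neg, abs_sub_comm]
    _ ≤ M := hM u u.2

theorem stmt2_general (T : ℝ) :
    ∃ K : ℝ, 0 ≤ K ∧
      ∀ (z₁ z₂ y₁ y₂ x₁ x₂ : ℝ → ℝ),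
        ContinuousOn z₁ (Icc 0 T) → ContinuousOn z₂ (Icc 0 T) →
        0 ≤ z₁ 0 → 0 ≤ z₂ 0 →
        (∀ t ∈ Icc 0 T, y₁ t = ⨆ s : Icc 0 t, max (-(z₁ s)) 0) →
        (∀ t ∈ Icc 0 T, y₂ t = ⨆ s : Icc 0 t, max (-(z₂ s)) 0) →
        (∀ t ∈ Icc 0 T, x₁ t = z₁ t + y₁ t) →
        (∀ t ∈ Icc 0 T, x₂ t = z₂ t + y₂ t) →
        ∀ t ∈ Icc 0 T,
          (⨆ s : Icc 0 t, |y₁ s - y₂ s|) ≤ K * ⨆ s : Icc 0 t, |z₁ s - z₂ s| ∧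
          (⨆ s : Icc 0 t, |x₁ s - x₂ s|) ≤ 2 * K * ⨆ s : Icc 0 t, |z₁ s - z₂ s| := by
  refine ⟨1, zero_le_one, ?_⟩
  intro z₁ z₂ y₁ y₂ x₁ x₂ hz₁ hz₂ _ _ hy₁ hy₂ hx₁ hx₂ t ht
  have hsub : Icc 0 t ⊆ Icc 0 T := Icc_subset_Icc le_rfl ht.2
  have : Nonempty (Icc (0 : ℝ) t) := ⟨⟨0, left_mem_Icc.2 ht.1⟩⟩
  set M := ⨆ s : Icc 0 t, |z₁ s - z₂ s|
  have hzM : ∀ u ∈ Icc 0 t, |z₁ u - z₂ u| ≤ M := fun u hu =>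
    le_ciSup (bddAbove_range_of_continuousOn_Icc ((hz₁.mono hsub).sub (hz₂.mono hsub)).abs)
      (⟨u, hu⟩ : Icc 0 t)
  have hyM : ∀ s ∈ Icc 0 t, |y₁ s - y₂ s| ≤ M := fun s hs => by
    have hs0 : Icc 0 s ⊆ Icc 0 T := Icc_subset_Icc le_rfl (hsub hs).2
    rw [hy₁ s (hsub hs), hy₂ s (hsub hs)]
    exact abs_iSup_negPart_sub_iSup_negPart_le hs.1 (hz₁.mono hs0) (hz₂.mono hs0)
      fun u hu => hzM u ⟨hu.1, hu.2.trans hs.2⟩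
  refine ⟨(one_mul M).symm ▸ ciSup_le fun s => hyM s s.2, ciSup_le fun s => ?_⟩
  rw [hx₁ s (hsub s.2), hx₂ s (hsub s.2)]
  calc |z₁ s + y₁ s - (z₂ s + y₂ s)| = |(z₁ s - z₂ s) + (y₁ s - y₂ s)| := by ring_nf
    _ ≤ |z₁ s - z₂ s| + |y₁ s - y₂ s| := abs_add_le _ _
    _ ≤ 2 * 1 * M := by linarith [hzM s s.2, hyM s s.2]

/-- Lipschitz property of the Skorokhod map in the supremum norm: the regulator
with constant `K` and the reflector with constant `2K`. -/
theorem stmt2 (T : ℝ) (hT : 0 < T) :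
    ∃ K : ℝ, 0 ≤ K ∧
      ∀ (z₁ z₂ y₁ y₂ x₁ x₂ : ℝ → ℝ),
        ContinuousOn z₁ (Icc 0 T) → ContinuousOn z₂ (Icc 0 T) →
        0 ≤ z₁ 0 → 0 ≤ z₂ 0 →
        (∀ t ∈ Icc 0 T, y₁ t = ⨆ s : Icc 0 t, max (-(z₁ s)) 0) →
        (∀ t ∈ Icc 0 T, y₂ t = ⨆ s : Icc 0 t, max (-(z₂ s)) 0) →
        (∀ t ∈ Icc 0 T, x₁ t = z₁ t + y₁ t) →
        (∀ t ∈ Icc 0 T, x₂ t = z₂ t + y₂ t) →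
        ∀ t ∈ Icc 0 T,
          (⨆ s : Icc 0 t, |y₁ s - y₂ s|) ≤ K * ⨆ s : Icc 0 t, |z₁ s - z₂ s| ∧
          (⨆ s : Icc 0 t, |x₁ s - x₂ s|) ≤ 2 * K * ⨆ s : Icc 0 t, |z₁ s - z₂ s| :=
  stmt2_general T
end

section
/- Let z : [0,T] → ℝ be continuous with z(0) ≥ 0 and let y(t) = max_{s∈[0,t]}(z(s))⁻. Fix t ∈ (0,T], suppose y is strictly increasing at t (i.e., y(t) > y(t−ε) for all small ε > 0). Then y(t) = −z(t) ≥ 0, and for all s < t, |y(t) − y(s)| ≤ |z(t) − z(s)|. -/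
open Set

/-- If the Skorokhod regulator `y t = max_{s ≤ t} (z s)⁻` is strictly increasing
at `t`, then `y t = -z t ≥ 0` and increments of `y` are dominated by those of `z`. -/
theorem stmt3 (T : ℝ) (hT : 0 < T) (z : ℝ → ℝ)
    (hz : ContinuousOn z (Icc 0 T)) (hz0 : 0 ≤ z 0)
    (y : ℝ → ℝ)
    (hy : ∀ u ∈ Icc 0 T, y u = ⨆ s : Icc 0 u, max (-(z s)) 0)
    (t : ℝ) (ht : t ∈ Ioc 0 T)
    (hinc : ∃ ε₀ > 0, ∀ ε : ℝ, 0 < ε → ε ≤ ε₀ → ε ≤ t → y (t - ε) < y t) :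
    y t = -z t ∧ 0 ≤ y t ∧ ∀ s ∈ Ico 0 t, |y t - y s| ≤ |z t - z s| := by
  obtain ⟨ht0, htT⟩ := ht
  set g : ℝ → ℝ := fun s => max (-(z s)) 0 with hg
  have hgc : ContinuousOn g (Icc 0 T) := fun x hx => (((hz x hx).neg).max continuousWithinAt_const)
  -- key facts about y on [0,T]
  have key : ∀ u, u ∈ Icc 0 T → (∀ s ∈ Icc 0 u, g s ≤ y u) ∧ ∃ s₀ ∈ Icc 0 u, y u = g s₀ := by
    intro u hu
    have h0u : (0:ℝ) ∈ Icc 0 u := ⟨le_refl 0, hu.1⟩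
    haveI : Nonempty (Icc (0:ℝ) u) := ⟨⟨0, h0u⟩⟩
    have hsub : Icc (0:ℝ) u ⊆ Icc 0 T := Icc_subset_Icc le_rfl hu.2
    have hcomp : IsCompact (Icc (0:ℝ) u) := isCompact_Icc
    have hgcu : ContinuousOn g (Icc 0 u) := hgc.mono hsub
    have hbdd : BddAbove (Set.range fun s : Icc 0 u => g s) := by
      rw [← Set.image_eq_range]
      exact (hcomp.image_of_continuousOn hgcu).bddAbove
    have hyu : y u = ⨆ s : Icc 0 u, g s := hy u hu
    constructor
    · intro s hs
      rw [hyu]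
      exact le_ciSup hbdd ⟨s, hs⟩
    · obtain ⟨s₀, hs₀, hmax⟩ := hcomp.exists_isMaxOn ⟨0, h0u⟩ hgcu
      refine ⟨s₀, hs₀, le_antisymm ?_ ?_⟩
      · rw [hyu]; exact ciSup_le fun s => hmax s.2
      · rw [hyu]; exact le_ciSup hbdd ⟨s₀, hs₀⟩
  have hmono : ∀ a b, 0 ≤ a → a ≤ b → b ≤ T → y a ≤ y b := by
    intro a b ha hab hbT
    obtain ⟨s₀, hs₀, hya⟩ := (key a ⟨ha, hab.trans hbT⟩).2
    rw [hya]
    exact (key b ⟨ha.trans hab, hbT⟩).1 s₀ ⟨hs₀.1, hs₀.2.trans hab⟩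
  have hnonneg : ∀ u, u ∈ Icc 0 T → 0 ≤ y u := by
    intro u hu
    have := (key u hu).1 0 ⟨le_refl 0, hu.1⟩
    exact le_trans (le_max_right _ _) this
  have htIcc : t ∈ Icc 0 T := ⟨le_of_lt ht0, htT⟩
  obtain ⟨ε₀, hε₀, hεh⟩ := hinc
  -- sup attained at t
  obtain ⟨s₀, hs₀, hyt⟩ := (key t htIcc).2
  have hs₀t : s₀ = t := by
    by_contra hne
    have hlt : s₀ < t := lt_of_le_of_ne hs₀.2 hne
    set ε := min ε₀ (t - s₀) with hε
    have hεpos : 0 < ε := lt_min hε₀ (by linarith)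
    have hεt : ε ≤ t := (min_le_right _ _).trans (by linarith [hs₀.1])
    have hlt2 := hεh ε hεpos (min_le_left _ _) hεt
    have hte : t - ε ∈ Icc 0 T := ⟨by linarith, by linarith [hεpos]⟩
    have : g s₀ ≤ y (t - ε) :=
      (key (t - ε) hte).1 s₀ ⟨hs₀.1, by
        have := min_le_right ε₀ (t - s₀); linarith⟩
    rw [hyt] at hlt2
    linarith
  rw [hs₀t] at hyt
  -- y t > 0
  have hytpos : 0 < y t := by
    set ε := min ε₀ t with hε
    have hεpos : 0 < ε := lt_min hε₀ ht0
    have hlt2 := hεh ε hεpos (min_le_left _ _) (min_le_right _ _)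
    have hte : t - ε ∈ Icc 0 T := ⟨by linarith [min_le_right ε₀ t], by linarith [hεpos]⟩
    exact lt_of_le_of_lt (hnonneg _ hte) hlt2
  have hytz : y t = -z t := by
    rcases le_or_gt (-(z t)) 0 with h | h
    · exfalso
      have : g t = 0 := max_eq_right h
      rw [hyt, this] at hytpos
      exact lt_irrefl 0 hytpos
    · rw [hyt]; exact max_eq_left (le_of_lt h)
  refine ⟨hytz, le_of_lt hytpos, ?_⟩
  intro s hs
  have hsIcc : s ∈ Icc 0 T := ⟨hs.1, (le_of_lt hs.2).trans htT⟩
  have hys : y s ≤ y t := hmono s t hs.1 (le_of_lt hs.2) htT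
  have hgs : -(z s) ≤ y s :=
    le_trans (le_max_left _ _) ((key s hsIcc).1 s ⟨hs.1, le_refl s⟩)
  rw [abs_of_nonneg (sub_nonneg.2 hys)]
  have h1 : y t - y s ≤ -(z t - z s) := by rw [hytz] at *; linarith
  exact h1.trans (neg_le_abs _)
end

section
/- Let z : [0,T] → ℝ be continuous with z(0) ≥ 0, let y(t) = max_{s∈[0,t]}(z(s))⁻, and suppose 0 < α < 1. If z is (1−α)-Hölder continuous on [0,T] with Hölder constant C, then y is (1−α)-Hölder continuous on [0,T] with Hölder constant at most C. Consequently x = z + y is (1−α)-Hölder with constant at most 2C. -/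
open Set

/-- Hölder continuity is preserved by the Skorokhod map: if `z` is `(1-α)`-Hölder
with constant `C`, then the regulator `y` is `(1-α)`-Hölder with constant `C`
and the reflector `x = z + y` is `(1-α)`-Hölder with constant `2C`. -/
theorem stmt4 (T α C : ℝ) (hT : 0 < T) (hα : α ∈ Ioo (0 : ℝ) 1) (hC : 0 ≤ C)
    (z y x : ℝ → ℝ) (hz0 : 0 ≤ z 0)
    (hy : ∀ t ∈ Icc 0 T, y t = ⨆ s : Icc 0 t, max (-(z s)) 0)
    (hx : ∀ t ∈ Icc 0 T, x t = z t + y t)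
    (hzH : ∀ s ∈ Icc 0 T, ∀ t ∈ Icc 0 T, |z t - z s| ≤ C * |t - s| ^ (1 - α)) :
    (∀ s ∈ Icc 0 T, ∀ t ∈ Icc 0 T, |y t - y s| ≤ C * |t - s| ^ (1 - α)) ∧
    (∀ s ∈ Icc 0 T, ∀ t ∈ Icc 0 T, |x t - x s| ≤ 2 * C * |t - s| ^ (1 - α)) := by
  obtain ⟨hα0, hα1⟩ := hα
  have hexp : (0:ℝ) ≤ 1 - α := by linarith
  set g : ℝ → ℝ := fun u => max (-(z u)) 0 with hgdef
  have hg_lip : ∀ u v, |g u - g v| ≤ |z u - z v| := by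
    intro u v
    calc |g u - g v| ≤ |(-(z u)) - (-(z v))| := abs_max_sub_max_le_abs _ _ _
      _ = |z u - z v| := by rw [neg_sub_neg, abs_sub_comm]
  have hbdd : ∀ t ∈ Icc (0:ℝ) T, BddAbove (Set.range (fun u : Icc (0:ℝ) t => g u)) := by
    intro t ht
    refine ⟨C * T ^ (1 - α), ?_⟩
    rintro _ ⟨u, rfl⟩
    have hu : (u:ℝ) ∈ Icc (0:ℝ) T := ⟨u.2.1, u.2.2.trans ht.2⟩
    have h1 : g u ≤ |z u - z 0| := by
      apply max_le
      · have : -(z (u:ℝ)) ≤ z 0 - z u := by linarith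
        exact this.trans ((le_abs_self _).trans (by rw [abs_sub_comm]))
      · exact abs_nonneg _
    have h2 : |z u - z 0| ≤ C * |(u:ℝ) - 0| ^ (1 - α) :=
      hzH 0 ⟨le_rfl, hT.le⟩ u hu
    have h3 : |(u:ℝ) - 0| ^ (1 - α) ≤ T ^ (1 - α) := by
      rw [sub_zero, abs_of_nonneg u.2.1]
      exact Real.rpow_le_rpow u.2.1 hu.2 hexp
    calc g u ≤ C * |(u:ℝ) - 0| ^ (1 - α) := h1.trans h2
      _ ≤ C * T ^ (1 - α) := mul_le_mul_of_nonneg_left h3 hC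
  have hne : ∀ t : ℝ, 0 ≤ t → Nonempty (Icc (0:ℝ) t) := fun t ht => ⟨⟨0, le_rfl, ht⟩⟩
  -- monotonicity
  have hmono : ∀ s t : ℝ, 0 ≤ s → s ≤ t → t ≤ T → y s ≤ y t := by
    intro s t hs hst htT
    have hs' : s ∈ Icc (0:ℝ) T := ⟨hs, hst.trans htT⟩
    have ht' : t ∈ Icc (0:ℝ) T := ⟨hs.trans hst, htT⟩
    rw [hy s hs', hy t ht']
    haveI := hne s hs
    apply ciSup_le
    intro u
    exact le_ciSup_of_le (hbdd t ht') ⟨u, u.2.1, u.2.2.trans hst⟩ le_rfl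
  -- key bound
  have hkey : ∀ s t : ℝ, 0 ≤ s → s ≤ t → t ≤ T →
      y t ≤ y s + C * (t - s) ^ (1 - α) := by
    intro s t hs hst htT
    have hs' : s ∈ Icc (0:ℝ) T := ⟨hs, hst.trans htT⟩
    have ht' : t ∈ Icc (0:ℝ) T := ⟨hs.trans hst, htT⟩
    have hgs : g s ≤ y s := by
      rw [hy s hs']
      exact le_ciSup (hbdd s hs') ⟨s, hs, le_rfl⟩
    rw [hy t ht']
    haveI := hne t (hs.trans hst)
    apply ciSup_le
    intro u
    by_cases hus : (u:ℝ) ≤ s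
    · have : g (u:ℝ) ≤ y s := by
        rw [hy s hs']
        exact le_ciSup (hbdd s hs') ⟨u, u.2.1, hus⟩
      have hpow : 0 ≤ C * (t - s) ^ (1 - α) :=
        mul_nonneg hC (Real.rpow_nonneg (by linarith) _)
      linarith
    · push_neg at hus
      have hu' : (u:ℝ) ∈ Icc (0:ℝ) T := ⟨u.2.1, u.2.2.trans htT⟩
      have h1 : g (u:ℝ) - g s ≤ |z u - z s| :=
        (le_abs_self _).trans (hg_lip u s)
      have h2 : |z u - z s| ≤ C * |(u:ℝ) - s| ^ (1 - α) := hzH s hs' u hu'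
      have h3 : |(u:ℝ) - s| ^ (1 - α) ≤ (t - s) ^ (1 - α) := by
        rw [abs_of_nonneg (by linarith : (0:ℝ) ≤ (u:ℝ) - s)]
        exact Real.rpow_le_rpow (by linarith) (by linarith [u.2.2]) hexp
      have h4 : C * |(u:ℝ) - s| ^ (1 - α) ≤ C * (t - s) ^ (1 - α) :=
        mul_le_mul_of_nonneg_left h3 hC
      linarith
  -- Hölder for y
  have hyH : ∀ s ∈ Icc (0:ℝ) T, ∀ t ∈ Icc (0:ℝ) T,
      |y t - y s| ≤ C * |t - s| ^ (1 - α) := by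
    have main : ∀ s t : ℝ, 0 ≤ s → s ≤ t → t ≤ T →
        |y t - y s| ≤ C * |t - s| ^ (1 - α) := by
      intro s t hs hst htT
      rw [abs_of_nonneg (by linarith [hmono s t hs hst htT]),
        abs_of_nonneg (by linarith : (0:ℝ) ≤ t - s)]
      linarith [hkey s t hs hst htT]
    intro s hs t ht
    rcases le_total s t with h | h
    · exact main s t hs.1 h ht.2
    · rw [abs_sub_comm, abs_sub_comm t s]
      exact main t s ht.1 h hs.2
  refine ⟨hyH, ?_⟩
  intro s hs t ht
  rw [hx s hs, hx t ht]
  have h1 := hzH s hs t ht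
  have h2 := hyH s hs t ht
  calc |z t + y t - (z s + y s)| = |(z t - z s) + (y t - y s)| := by ring_nf
    _ ≤ |z t - z s| + |y t - y s| := abs_add_le _ _
    _ ≤ 2 * C * |t - s| ^ (1 - α) := by linarith
end

section
/- Let z, z' : [0,T] → ℝ be continuous with z(0), z'(0) ≥ 0, y(t) = max_{s∈[0,t]}(z(s))⁻, y'(t) = max_{s∈[0,t]}(z'(s))⁻. Then for any λ ≥ 0: sup_{t∈[0,T]} e^{−λt} |y(t) − y'(t)| ≤ K_l · sup_{t∈[0,T]} e^{−λt} |z(t) − z'(t)|, where K_l is the Lipschitz constant of the Skorokhod regulator map (one may take K_l = 1). In particular, for each t there exists t₂ ≤ t with |y(t) − y'(t)| ≤ K_l |z(t₂) − z'(t₂)|. -/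
open Set

lemma stmt14_bdd (t : ℝ) (f : ℝ → ℝ) (hf : ContinuousOn f (Icc 0 t)) :
    BddAbove (Set.range fun s : Icc (0 : ℝ) t => f s) := by
  have h := (isCompact_Icc.image_of_continuousOn hf).bddAbove
  rwa [Set.image_eq_range] at h

/-- Lipschitz property (with constant `K_l = 1`) of the Skorokhod regulator map in
exponentially weighted sup norms, together with the pointwise witness-time bound. -/
theorem stmt14 (T : ℝ) (hT : 0 < T) (z z' : ℝ → ℝ)
    (hz : ContinuousOn z (Icc 0 T)) (hz' : ContinuousOn z' (Icc 0 T))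
    (hz0 : 0 ≤ z 0) (hz'0 : 0 ≤ z' 0)
    (y y' : ℝ → ℝ)
    (hy : ∀ t ∈ Icc 0 T, y t = ⨆ s : Icc 0 t, max (-(z s)) 0)
    (hy' : ∀ t ∈ Icc 0 T, y' t = ⨆ s : Icc 0 t, max (-(z' s)) 0) :
    (∀ lam : ℝ, 0 ≤ lam →
      (⨆ t : Icc (0 : ℝ) T, Real.exp (-lam * t) * |y t - y' t|) ≤
        1 * ⨆ t : Icc (0 : ℝ) T, Real.exp (-lam * t) * |z t - z' t|) ∧
    (∀ t ∈ Icc (0 : ℝ) T, ∃ t₂ ∈ Icc (0 : ℝ) t, |y t - y' t| ≤ 1 * |z t₂ - z' t₂|) := by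
  -- key pointwise fact
  have key : ∀ t ∈ Icc (0 : ℝ) T, ∃ t₂ ∈ Icc (0 : ℝ) t,
      |y t - y' t| ≤ |z t₂ - z' t₂| := by
    intro t ht
    obtain ⟨ht0, htT⟩ := ht
    have hsub : Icc (0 : ℝ) t ⊆ Icc 0 T := Icc_subset_Icc le_rfl htT
    have hzt : ContinuousOn z (Icc 0 t) := hz.mono hsub
    have hz't : ContinuousOn z' (Icc 0 t) := hz'.mono hsub
    have habs : ContinuousOn (fun s => |z s - z' s|) (Icc 0 t) :=
      (hzt.sub hz't).abs
    obtain ⟨t₂, ht₂, hmax⟩ := isCompact_Icc.exists_isMaxOn (nonempty_Icc.2 ht0) habs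
    refine ⟨t₂, ht₂, ?_⟩
    have hM : ∀ s ∈ Icc (0 : ℝ) t, |z s - z' s| ≤ |z t₂ - z' t₂| := fun s hs => hmax hs
    haveI : Nonempty (Icc (0 : ℝ) t) := ⟨⟨0, le_rfl, ht0⟩⟩
    have B : BddAbove (Set.range fun s : Icc (0 : ℝ) t => max (-(z s)) 0) :=
      stmt14_bdd t _ (hzt.neg.sup continuousOn_const)
    have B' : BddAbove (Set.range fun s : Icc (0 : ℝ) t => max (-(z' s)) 0) :=
      stmt14_bdd t _ (hz't.neg.sup continuousOn_const)
    rw [hy t ⟨ht0, htT⟩, hy' t ⟨ht0, htT⟩]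
    rw [abs_sub_le_iff]
    constructor
    · rw [sub_le_iff_le_add]
      apply ciSup_le
      intro s
      have h1 : max (-(z s)) 0 - max (-(z' s)) 0 ≤ |z s - z' s| := by
        calc max (-(z s)) 0 - max (-(z' s)) 0 ≤ |max (-(z s)) 0 - max (-(z' s)) 0| :=
              le_abs_self _
          _ ≤ |(-(z s)) - (-(z' s))| := abs_max_sub_max_le_abs _ _ _
          _ = |z' s - z s| := by ring_nf
          _ = |z s - z' s| := abs_sub_comm _ _
      have h2 : max (-(z' s)) 0 ≤ ⨆ s : Icc (0 : ℝ) t, max (-(z' s)) 0 := le_ciSup B' s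
      have h3 : |z (s : ℝ) - z' (s : ℝ)| ≤ |z t₂ - z' t₂| := hM s s.2
      linarith
    · rw [sub_le_iff_le_add]
      apply ciSup_le
      intro s
      have h1 : max (-(z' s)) 0 - max (-(z s)) 0 ≤ |z s - z' s| := by
        calc max (-(z' s)) 0 - max (-(z s)) 0 ≤ |max (-(z' s)) 0 - max (-(z s)) 0| :=
              le_abs_self _
          _ ≤ |(-(z' s)) - (-(z s))| := abs_max_sub_max_le_abs _ _ _
          _ = |z s - z' s| := by ring_nf
      have h2 : max (-(z s)) 0 ≤ ⨆ s : Icc (0 : ℝ) t, max (-(z s)) 0 := le_ciSup B s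
      have h3 : |z (s : ℝ) - z' (s : ℝ)| ≤ |z t₂ - z' t₂| := hM s s.2
      linarith
  constructor
  · intro lam hlam
    haveI : Nonempty (Icc (0 : ℝ) T) := ⟨⟨0, le_rfl, hT.le⟩⟩
    have BS : BddAbove (Set.range fun t : Icc (0 : ℝ) T =>
        Real.exp (-lam * t) * |z t - z' t|) := by
      exact stmt14_bdd T (fun s => Real.exp (-lam * s) * |z s - z' s|)
        (((Real.continuous_exp.comp (continuous_const.mul continuous_id)).continuousOn).mul
          (hz.sub hz').abs)
    rw [one_mul]
    apply ciSup_le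
    intro t
    obtain ⟨t₂, ht₂, hle⟩ := key t t.2
    have ht₂T : t₂ ∈ Icc (0 : ℝ) T := ⟨ht₂.1, ht₂.2.trans t.2.2⟩
    have hexp : Real.exp (-lam * t) ≤ Real.exp (-lam * t₂) := by
      apply Real.exp_le_exp.2
      nlinarith [ht₂.2, hlam]
    calc Real.exp (-lam * t) * |y t - y' t|
        ≤ Real.exp (-lam * t) * |z t₂ - z' t₂| := by
          exact mul_le_mul_of_nonneg_left hle (Real.exp_pos _).le
      _ ≤ Real.exp (-lam * t₂) * |z t₂ - z' t₂| :=
          mul_le_mul_of_nonneg_right hexp (abs_nonneg _)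
      _ ≤ ⨆ t : Icc (0 : ℝ) T, Real.exp (-lam * t) * |z t - z' t| :=
          le_ciSup BS ⟨t₂, ht₂T⟩
  · intro t ht
    obtain ⟨t₂, ht₂, hle⟩ := key t ht
    exact ⟨t₂, ht₂, by rwa [one_mul]⟩
end

section
/- Let z : [0,T] → ℝ be continuous with z(0) ≥ 0, y(t) = max_{s∈[0,t]}(z(s))⁻. Then for every λ ≥ 0 and t ∈ [0,T]: e^{−λt} |y(t)| ≤ sup_{s∈[0,t]} e^{−λs} |z(s)|. Consequently sup_{t∈[0,T]} e^{−λt}|y(t)| ≤ sup_{t∈[0,T]} e^{−λt}|z(t)|. -/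
open Set

/-- Weighted bound for the Skorokhod regulator:
`e^{-λt} |y t| ≤ sup_{s∈[0,t]} e^{-λs} |z s|`, and the sup-over-`[0,T]` consequence. -/
theorem stmt15 (T : ℝ) (hT : 0 < T) (z : ℝ → ℝ)
    (hz : ContinuousOn z (Icc 0 T)) (hz0 : 0 ≤ z 0)
    (y : ℝ → ℝ)
    (hy : ∀ t ∈ Icc 0 T, y t = ⨆ s : Icc 0 t, max (-(z s)) 0) :
    (∀ lam : ℝ, 0 ≤ lam → ∀ t ∈ Icc (0 : ℝ) T,
      Real.exp (-lam * t) * |y t| ≤ ⨆ s : Icc (0 : ℝ) t, Real.exp (-lam * s) * |z s|) ∧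
    (∀ lam : ℝ, 0 ≤ lam →
      (⨆ t : Icc (0 : ℝ) T, Real.exp (-lam * t) * |y t|) ≤
        ⨆ t : Icc (0 : ℝ) T, Real.exp (-lam * t) * |z t|) := by
  have hbdd2 : ∀ lam : ℝ, ∀ t, t ∈ Icc (0:ℝ) T →
      BddAbove (range fun s : Icc (0:ℝ) t => Real.exp (-lam * s) * |z s|) := by
    intro lam t ht
    have hsub : Icc (0:ℝ) t ⊆ Icc 0 T := Icc_subset_Icc le_rfl ht.2
    have hc : ContinuousOn (fun s => Real.exp (-lam * s) * |z s|) (Icc 0 t) :=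
      ((Real.continuous_exp.comp (continuous_const.mul continuous_id)).continuousOn).mul
        ((hz.mono hsub).abs)
    have := (isCompact_Icc : IsCompact (Icc (0:ℝ) t)).bddAbove_image hc
    rwa [image_eq_range] at this
  have key : ∀ lam : ℝ, 0 ≤ lam → ∀ t ∈ Icc (0:ℝ) T,
      Real.exp (-lam * t) * |y t| ≤ ⨆ s : Icc (0:ℝ) t, Real.exp (-lam * s) * |z s| := by
    intro lam hlam t ht
    have ht0 : (0:ℝ) ≤ t := ht.1
    haveI : Nonempty (Icc (0:ℝ) t) := ⟨⟨0, le_rfl, ht0⟩⟩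
    have hsub : Icc (0:ℝ) t ⊆ Icc 0 T := Icc_subset_Icc le_rfl ht.2
    have hbdd1 : BddAbove (range fun s : Icc (0:ℝ) t => max (-(z s)) 0) := by
      obtain ⟨M, hM⟩ := hbdd2 0 t ht
      refine ⟨M, ?_⟩
      rintro x ⟨s, rfl⟩
      have h := hM ⟨s, rfl⟩
      simp only [neg_zero, zero_mul, Real.exp_zero, one_mul] at h
      exact le_trans (max_le (neg_le_abs _) (abs_nonneg _)) h
    have hb2 := hbdd2 lam t ht
    have hy0 : 0 ≤ y t := by
      rw [hy t ht]
      exact le_trans (le_max_right (-(z 0)) 0) (le_ciSup hbdd1 ⟨0, le_rfl, ht0⟩)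
    rw [abs_of_nonneg hy0, hy t ht]
    set S := ⨆ s : Icc (0:ℝ) t, Real.exp (-lam * s) * |z s| with hS
    have hS0 : 0 ≤ S := by
      have h := le_ciSup hb2 ⟨0, le_rfl, ht0⟩
      have : (0:ℝ) ≤ Real.exp (-lam * (0:ℝ)) * |z 0| := by positivity
      exact this.trans h
    have hmain : (⨆ s : Icc (0:ℝ) t, max (-(z s)) 0) ≤ Real.exp (lam * t) * S := by
      apply ciSup_le
      intro s
      have h1 : Real.exp (-lam * s) * |z s| ≤ S := le_ciSup hb2 s
      calc max (-(z s)) 0 ≤ |z s| := max_le (neg_le_abs _) (abs_nonneg _)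
        _ = Real.exp (lam * s) * (Real.exp (-lam * s) * |z s|) := by
            rw [← mul_assoc, ← Real.exp_add]; simp
        _ ≤ Real.exp (lam * s) * S :=
            mul_le_mul_of_nonneg_left h1 (Real.exp_pos _).le
        _ ≤ Real.exp (lam * t) * S :=
            mul_le_mul_of_nonneg_right
              (Real.exp_le_exp.2 (mul_le_mul_of_nonneg_left s.2.2 hlam)) hS0
    calc Real.exp (-lam * t) * (⨆ s : Icc (0:ℝ) t, max (-(z s)) 0)
        ≤ Real.exp (-lam * t) * (Real.exp (lam * t) * S) :=
          mul_le_mul_of_nonneg_left hmain (Real.exp_pos _).le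
      _ = S := by rw [← mul_assoc, ← Real.exp_add]; simp
  refine ⟨key, ?_⟩
  intro lam hlam
  haveI : Nonempty (Icc (0:ℝ) T) := ⟨⟨0, le_rfl, hT.le⟩⟩
  have hbT := hbdd2 lam T ⟨hT.le, le_rfl⟩
  apply ciSup_le
  intro t
  refine (key lam hlam t t.2).trans ?_
  haveI : Nonempty (Icc (0:ℝ) (t:ℝ)) := ⟨⟨0, le_rfl, t.2.1⟩⟩
  apply ciSup_le
  intro s
  exact le_ciSup hbT ⟨s, s.2.1, s.2.2.trans t.2.2⟩
end
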